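/- Let b̂₀ = e₃ be the third standard basis vector of ℝ³, with ∇_⊥, Δ, Δ_⊥, X_⊥, X∥ as follows: ∇_⊥ := (∂_x, ∂_y, 0), Δ := ∂_x² + ∂_y² + ∂_z², Δ_⊥ := ∂_x² + ∂_y², X_⊥ := X − (X·b̂₀)b̂₀, X∥ := X·b̂₀. Let A : ℝ³ → ℝ³ be three times continuously differentiable and 𝒥 : ℝ³ → ℝ³ continuously differentiable with ∇·𝒥 = 0 pointwise. If −Δ_⊥ A∥ = 𝒥∥ and −Δ A_⊥ = 𝒥_⊥ − ∇_⊥(∂_z A∥) hold pointwise, then the perpendicular divergence of A is harmonic: Δ(∂_x A_x + ∂_y A_y) = 0 everywhere. -/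

import Mathlib

/-!
Partial derivatives of a `C³` field commute, so by the perpendicular equations
`Δ(∂ₓAₓ + ∂ᵧAᵧ) = ∂ₓΔAₓ + ∂ᵧΔAᵧ = -(∂ₓ𝒥ₓ + ∂ᵧ𝒥ᵧ) + ∂_z Δ_⊥A_z`,
and the parallel equation turns the last term into `-∂_z 𝒥_z`, leaving `-∇·𝒥 = 0`.
-/

open Matrix

/-- The partial derivative `∂f/∂rᵢ`. -/
noncomputable def pd (i : Fin 3) (f : (Fin 3 → ℝ) → ℝ) (r : Fin 3 → ℝ) : ℝ :=
  fderiv ℝ f r (Pi.single i 1)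

/-- The divergence `∇·F` of a vector field on ℝ³. -/
noncomputable def divg (F : (Fin 3 → ℝ) → Fin 3 → ℝ) (r : Fin 3 → ℝ) : ℝ :=
  ∑ i, pd i (fun x => F x i) r

/-- The constant unit field `b̂₀ = e₃`. -/
def e3 : Fin 3 → ℝ := Pi.single 2 1

/-- The perpendicular part `v_⊥ = v − (v·e₃) e₃`. -/
noncomputable def perp (v : Fin 3 → ℝ) : Fin 3 → ℝ := v - (v ⬝ᵥ e3) • e3

/-- The Laplacian `Δf = ∂_x²f + ∂_y²f + ∂_z²f`. -/
noncomputable def lap (f : (Fin 3 → ℝ) → ℝ) (r : Fin 3 → ℝ) : ℝ :=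
  ∑ i, pd i (fun x => pd i f x) r

/-- The perpendicular Laplacian `Δ_⊥ f = ∂_x²f + ∂_y²f`. -/
noncomputable def lapPerp (f : (Fin 3 → ℝ) → ℝ) (r : Fin 3 → ℝ) : ℝ :=
  pd 0 (fun x => pd 0 f x) r + pd 1 (fun x => pd 1 f x) r

/-- The perpendicular gradient `∇_⊥ f = (∂_x f, ∂_y f, 0)`. -/
noncomputable def gradPerp (f : (Fin 3 → ℝ) → ℝ) (r : Fin 3 → ℝ) : Fin 3 → ℝ :=
  ![pd 0 f r, pd 1 f r, 0]

theorem fderiv_fderiv_apply_comm {E F : Type*} [NormedAddCommGroup E] [NormedSpace ℝ E]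
    [NormedAddCommGroup F] [NormedSpace ℝ F] {f : E → F} {x : E} (hf : ContDiffAt ℝ 2 f x)
    (v w : E) :
    fderiv ℝ (fun y => fderiv ℝ f y v) x w = fderiv ℝ (fun y => fderiv ℝ f y w) x v := by
  have hdf : DifferentiableAt ℝ (fderiv ℝ f) x :=
    (hf.fderiv_right (m := 1) le_rfl).differentiableAt one_ne_zero
  have hsnd (u : E) :
      fderiv ℝ (fun y => fderiv ℝ f y u) x = (fderiv ℝ (fderiv ℝ f) x).flip u := by
    simpa using fderiv_clm_apply hdf (differentiableAt_const u)
  simpa [hsnd] using (hf.isSymmSndFDerivAt (by simp)).eq w v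

section PartialDerivatives

variable {f g : (Fin 3 → ℝ) → ℝ} {r : Fin 3 → ℝ}

theorem contDiff_pd {m n : WithTop ℕ∞} (hf : ContDiff ℝ n f) (h : m + 1 ≤ n) (i : Fin 3) :
    ContDiff ℝ m (pd i f) := by
  exact (ContinuousLinearMap.apply ℝ ℝ (Pi.single i 1)).contDiff.comp (hf.fderiv_right h)

theorem pd_comm (hf : ContDiff ℝ 2 f) (i j : Fin 3) : pd i (pd j f) = pd j (pd i f) :=
  funext fun _ => fderiv_fderiv_apply_comm hf.contDiffAt _ _

theorem pd_pd_pd_comm (hf : ContDiff ℝ 3 f) (i j : Fin 3) :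
    pd i (pd j (pd j f)) = pd j (pd j (pd i f)) := by
  rw [pd_comm (contDiff_pd hf (by norm_num) j), pd_comm (hf.of_le (by norm_num)) i j]

theorem pd_add (hf : DifferentiableAt ℝ f r) (hg : DifferentiableAt ℝ g r) (i : Fin 3) :
    pd i (fun x => f x + g x) r = pd i f r + pd i g r := by
  simp [pd, fderiv_fun_add hf hg]

theorem pd_sub (hf : DifferentiableAt ℝ f r) (hg : DifferentiableAt ℝ g r) (i : Fin 3) :
    pd i (fun x => f x - g x) r = pd i f r - pd i g r := by
  simp [pd, fderiv_fun_sub hf hg]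

theorem pd_neg (i : Fin 3) : pd i (fun x => -f x) r = -pd i f r := by
  simp [pd, fderiv_fun_neg]

theorem pd_sum {ι : Type*} (s : Finset ι) {F : ι → (Fin 3 → ℝ) → ℝ}
    (hF : ∀ j ∈ s, DifferentiableAt ℝ (F j) r) (i : Fin 3) :
    pd i (fun x => ∑ j ∈ s, F j x) r = ∑ j ∈ s, pd i (F j) r := by
  simp [pd, fderiv_fun_sum hF]

end PartialDerivatives

section Laplacians

variable {f g : (Fin 3 → ℝ) → ℝ}

theorem differentiable_pd (hf : ContDiff ℝ 2 f) (i : Fin 3) : Differentiable ℝ (pd i f) :=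
  (contDiff_pd hf (m := 1) (by norm_num) i).differentiable one_ne_zero

theorem differentiable_pd_pd (hf : ContDiff ℝ 3 f) (i j : Fin 3) :
    Differentiable ℝ (pd i (pd j f)) :=
  differentiable_pd (contDiff_pd hf (by norm_num) j) i

theorem lap_add (hf : ContDiff ℝ 2 f) (hg : ContDiff ℝ 2 g) (r : Fin 3 → ℝ) :
    lap (fun x => f x + g x) r = lap f r + lap g r := by
  have hpd (i : Fin 3) : pd i (fun x => f x + g x) = fun x => pd i f x + pd i g x :=
    funext fun x => pd_add (hf.differentiable two_ne_zero x) (hg.differentiable two_ne_zero x) i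
  simp only [lap, hpd, pd_add (differentiable_pd hf _ r) (differentiable_pd hg _ r),
    Finset.sum_add_distrib]

theorem lap_pd (hf : ContDiff ℝ 3 f) (i : Fin 3) (r : Fin 3 → ℝ) :
    lap (pd i f) r = pd i (lap f) r := by
  unfold lap
  rw [pd_sum _ (fun j _ => differentiable_pd_pd hf j j r)]
  exact Finset.sum_congr rfl fun j _ => (congrFun (pd_pd_pd_comm hf i j) r).symm

theorem lapPerp_pd (hf : ContDiff ℝ 3 f) (i : Fin 3) (r : Fin 3 → ℝ) :
    lapPerp (pd i f) r = pd i (lapPerp f) r := by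
  unfold lapPerp
  rw [pd_add (differentiable_pd_pd hf 0 0 r) (differentiable_pd_pd hf 1 1 r),
    pd_pd_pd_comm hf i 0, pd_pd_pd_comm hf i 1]

end Laplacians

theorem perp_apply_of_ne (v : Fin 3 → ℝ) {i : Fin 3} (hi : i ≠ 2) : perp v i = v i := by
  simp [perp, e3, hi]

theorem gradPerp_apply_of_ne (f : (Fin 3 → ℝ) → ℝ) (r : Fin 3 → ℝ) {i : Fin 3}
    (hi : i ≠ 2) :
    gradPerp f r i = pd i f r := by
  fin_cases i <;> simp_all [gradPerp]

/-- if `∇·𝒥 = 0` and `A` solves the decoupled Poisson systems, then the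
perpendicular divergence of `A` is harmonic: `Δ(∂_x A_x + ∂_y A_y) = 0`. -/
theorem perp_divergence_harmonic
    (A Jv : (Fin 3 → ℝ) → Fin 3 → ℝ)
    (hA : ContDiff ℝ 3 A) (hJ : ContDiff ℝ 1 Jv)
    (hdivJ : ∀ r, divg Jv r = 0)
    (hpar : ∀ r, -lapPerp (fun x => A x 2) r = Jv r 2)
    (hperpEq : ∀ r, (fun i => -lap (fun x => perp (A x) i) r)
        = perp (Jv r) - gradPerp (fun x => pd 2 (fun y => A y 2) x) r) :
    ∀ r, lap (fun x => pd 0 (fun y => A y 0) x + pd 1 (fun y => A y 1) x) r = 0 := by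
  intro r
  have hAi : ∀ i, ContDiff ℝ 3 (fun x => A x i) := contDiff_pi.mp hA
  have hJi (i : Fin 3) : Differentiable ℝ (fun x => Jv x i) :=
    (contDiff_pi.mp hJ i).differentiable one_ne_zero
  have hlapA (i : Fin 3) (hi : i ≠ 2) :
      lap (fun x => A x i) = fun x => pd i (pd 2 fun y => A y 2) x - Jv x i := by
    funext x
    have h := congrFun (hperpEq x) i
    simp only [perp_apply_of_ne _ hi, gradPerp_apply_of_ne _ _ hi, Pi.sub_apply] at h
    linarith
  have hlapPerpA : lapPerp (fun x => A x 2) = fun x => -Jv x 2 :=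
    funext fun x => by rw [← hpar x, neg_neg]
  have hpd_lapA (i : Fin 3) (hi : i ≠ 2) : pd i (lap fun x => A x i) r =
      pd i (pd i (pd 2 fun y => A y 2)) r - pd i (fun x => Jv x i) r := by
    rw [hlapA i hi, pd_sub (differentiable_pd_pd (hAi 2) i 2 r) (hJi i r)]
  calc lap (fun x => pd 0 (fun y => A y 0) x + pd 1 (fun y => A y 1) x) r
      = pd 0 (lap fun x => A x 0) r + pd 1 (lap fun x => A x 1) r := by
        rw [lap_add (contDiff_pd (hAi 0) (by norm_num) 0) (contDiff_pd (hAi 1) (by norm_num) 1),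
          lap_pd (hAi 0), lap_pd (hAi 1)]
    _ = lapPerp (pd 2 fun y => A y 2) r
          - (pd 0 (fun x => Jv x 0) r + pd 1 (fun x => Jv x 1) r) := by
        rw [hpd_lapA 0 (by decide), hpd_lapA 1 (by decide), lapPerp]
        ring
    _ = -divg Jv r := by
        rw [lapPerp_pd (hAi 2), hlapPerpA, pd_neg, divg, Fin.sum_univ_three]
        ring
    _ = 0 := by rw [hdivJ, neg_zero]
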